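/- Let K and K̃ be positive semidefinite symmetric m×m real matrices with max_{i,j}|K_{ij} − K̃_{ij}| ≤ ε_K. Then for every vector w ∈ ℝᵐ with ‖w‖ ≤ 1, the vectors f = K^{1/2}w and f̃ = K̃^{1/2}w satisfy max_{j}|f_j − f̃_j| ≤ √(m·ε_K). -/

import Mathlib

open scoped ComplexOrder in
/-- The square root of a positive semidefinite matrix, as defined in Mathlib (Dec 2024). -/
noncomputable def Matrix.PosSemidef.sqrt {n : Type*} [Fintype n] [DecidableEq n] {𝕜 : Type*}
    [RCLike 𝕜] {A : Matrix n n 𝕜} (hA : A.PosSemidef) : Matrix n n 𝕜 :=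
  hA.1.eigenvectorUnitary.1 * Matrix.diagonal ((↑) ∘ (√·) ∘ hA.1.eigenvalues) *
  (star hA.1.eigenvectorUnitary : Matrix n n 𝕜)

/-!
Let `D = √K - √K'`. If `v` is a unit eigenvector of `D` with eigenvalue `c ≥ 0`, then
`√K v = √K' v + c v`, hence
`⟪(K - K') v, v⟫ = ‖√K v‖² - ‖√K' v‖² = 2 c ⟪√K' v, v⟫ + c² ≥ c²`,
and symmetrically for `c ≤ 0`. So every eigenvalue of the Hermitian matrix `D`, and therefore its
operator norm, is at most `√‖K - K'‖`; and `‖K - K'‖ ≤ m ε` since its entries are bounded by `ε`.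
Finally each coordinate of `D w` is bounded by `‖D w‖ ≤ ‖D‖ ‖w‖`.
-/

open scoped ComplexOrder

namespace Matrix.PosSemidef

variable {𝕜 n : Type*} [RCLike 𝕜] [Fintype n] [DecidableEq n] {A : Matrix n n 𝕜}

lemma posSemidef_sqrt (hA : A.PosSemidef) : hA.sqrt.PosSemidef := by
  rw [sqrt, star_eq_conjTranspose]
  refine PosSemidef.mul_mul_conjTranspose_same (posSemidef_diagonal_iff.mpr fun i ↦ ?_) _
  simp only [Function.comp_apply]
  exact_mod_cast Real.sqrt_nonneg _

lemma sqrt_mul_self (hA : A.PosSemidef) : hA.sqrt * hA.sqrt = A := by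
  set u := hA.1.eigenvectorUnitary
  set d : n → 𝕜 := (↑) ∘ (√·) ∘ hA.1.eigenvalues
  have hd : (fun i ↦ d i * d i) = RCLike.ofReal ∘ hA.1.eigenvalues := funext fun i ↦ by
    simp only [d, Function.comp_apply, ← RCLike.ofReal_mul,
      Real.mul_self_sqrt (hA.eigenvalues_nonneg i)]
  conv_rhs => rw [hA.1.spectral_theorem, Unitary.conjStarAlgAut_apply]
  calc hA.sqrt * hA.sqrt
      = (u : Matrix n n 𝕜) * diagonal d * ((star u : Matrix n n 𝕜) * u) * diagonal d *
          (star u : Matrix n n 𝕜) := by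
        simp only [sqrt, Matrix.mul_assoc]; rfl
    _ = _ := by
        rw [Unitary.coe_star_mul_self, Matrix.mul_one, Matrix.mul_assoc (u : Matrix n n 𝕜),
          diagonal_mul_diagonal, hd]

end Matrix.PosSemidef

namespace ContinuousLinearMap

variable {𝕜 E : Type*} [RCLike 𝕜] [NormedAddCommGroup E] [InnerProductSpace 𝕜 E]
  {A B : E →L[𝕜] E} {v : E} {c : ℝ}

open RCLike in
lemma sq_le_norm_mul_self_sub_mul_self_of_nonneg (hA : A.IsPositive) (hB : B.IsPositive)
    (hv : ‖v‖ = 1) (h : (A - B) v = (c : 𝕜) • v) (hc : 0 ≤ c) :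
    c ^ 2 ≤ ‖A * A - B * B‖ := by
  have hAv : A v = B v + (c : 𝕜) • v := by rw [← h, sub_apply, add_sub_cancel]
  have hquad : re (inner 𝕜 ((A * A - B * B) v) v) = ‖A v‖ ^ 2 - ‖B v‖ ^ 2 := by
    rw [sub_apply, mul_apply_eq_comp, mul_apply_eq_comp, inner_sub_left, map_sub,
      hA.inner_left_eq_inner_right, hB.inner_left_eq_inner_right,
      inner_self_eq_norm_sq, inner_self_eq_norm_sq]
  have hexpand : ‖A v‖ ^ 2 = ‖B v‖ ^ 2 + 2 * c * re (inner 𝕜 (B v) v) + c ^ 2 := by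
    rw [hAv, norm_add_sq (𝕜 := 𝕜), inner_smul_right, re_ofReal_mul, norm_smul, hv, norm_ofReal,
      abs_of_nonneg hc]
    ring
  calc c ^ 2 ≤ re (inner 𝕜 ((A * A - B * B) v) v) := by
        nlinarith [hB.re_inner_nonneg_left v]
    _ ≤ ‖A * A - B * B‖ := by
        grw [re_le_norm, norm_inner_le_norm, le_opNorm, hv]; simp

lemma sq_le_norm_mul_self_sub_mul_self (hA : A.IsPositive) (hB : B.IsPositive)
    (hv : ‖v‖ = 1) (h : (A - B) v = (c : 𝕜) • v) :
    c ^ 2 ≤ ‖A * A - B * B‖ := by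
  rcases le_total 0 c with hc | hc
  · exact sq_le_norm_mul_self_sub_mul_self_of_nonneg hA hB hv h hc
  · have h' : (B - A) v = ((-c : ℝ) : 𝕜) • v := by
      rw [← neg_sub, neg_apply, h, RCLike.ofReal_neg, neg_smul]
    rw [← neg_sq, norm_sub_rev]
    exact sq_le_norm_mul_self_sub_mul_self_of_nonneg hB hA hv h' (neg_nonneg.mpr hc)

end ContinuousLinearMap

open scoped Matrix.Norms.L2Operator

namespace Matrix

variable {𝕜 n : Type*} [RCLike 𝕜] [Fintype n] [DecidableEq n]

lemma PosSemidef.isPositive_toEuclideanCLM {A : Matrix n n 𝕜} (hA : A.PosSemidef) :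
    (toEuclideanCLM (n := n) (𝕜 := 𝕜) A).IsPositive := by
  rw [← ContinuousLinearMap.isPositive_toLinearMap_iff, coe_toEuclideanCLM_eq_toEuclideanLin]
  exact isPositive_toEuclideanLin_iff.mpr hA

lemma IsHermitian.l2_opNorm_eq {A : Matrix n n 𝕜} (hA : A.IsHermitian) :
    ‖A‖ = ‖hA.eigenvalues‖ := by
  have hU := hA.eigenvectorUnitary.2
  conv_lhs => rw [hA.spectral_theorem, Unitary.conjStarAlgAut_apply]
  rw [CStarRing.norm_mul_mem_unitary _ (Unitary.star_mem hU), CStarRing.norm_mem_unitary_mul _ hU,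
    l2_opNorm_diagonal]
  simp [Pi.norm_def]

lemma l2_opNorm_le_card_mul {M : Matrix n n 𝕜} {ε : ℝ} (hM : ∀ i j, ‖M i j‖ ≤ ε) :
    ‖M‖ ≤ Fintype.card n * ε := by
  have hbound : 0 ≤ Fintype.card n * ε := by
    rcases isEmpty_or_nonempty n with hn | ⟨⟨i⟩⟩
    · simp
    · exact mul_nonneg (Nat.cast_nonneg _) ((norm_nonneg _).trans (hM i i))
  have hrow (x : n → 𝕜) (i : n) : ‖(M *ᵥ x) i‖ ≤ ε * ∑ j, ‖x j‖ := calc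
    ‖(M *ᵥ x) i‖ ≤ ∑ j, ‖M i j‖ * ‖x j‖ := by
      simpa only [mulVec, dotProduct, norm_mul] using norm_sum_le Finset.univ fun j ↦ M i j * x j
    _ ≤ ∑ j, ε * ‖x j‖ := by gcongr with j; exact hM i j
    _ = ε * ∑ j, ‖x j‖ := (Finset.mul_sum ..).symm
  rw [cstar_norm_def]
  refine ContinuousLinearMap.opNorm_le_bound _ hbound fun x ↦ ?_
  refine (sq_le_sq₀ (norm_nonneg _) (by positivity)).mp ?_
  rw [EuclideanSpace.norm_sq_eq, ofLp_toEuclideanCLM, mul_pow, EuclideanSpace.norm_sq_eq]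
  calc ∑ i, ‖(M *ᵥ x.ofLp) i‖ ^ 2 ≤ ∑ i : n, (ε * ∑ j, ‖x.ofLp j‖) ^ 2 := by
        gcongr with i; exact hrow _ i
    _ = Fintype.card n * ε ^ 2 * (∑ j, ‖x.ofLp j‖) ^ 2 := by simp [mul_pow]; ring
    _ ≤ Fintype.card n * ε ^ 2 * (Fintype.card n * ∑ j, ‖x.ofLp j‖ ^ 2) := by
        gcongr; exact sq_sum_le_card_mul_sum_sq
    _ = _ := by ring

lemma PosSemidef.l2_opNorm_sub_sq_le {A B : Matrix n n 𝕜} (hA : A.PosSemidef) (hB : B.PosSemidef) :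
    ‖A - B‖ ^ 2 ≤ ‖A * A - B * B‖ := by
  have hD : (A - B).IsHermitian := hA.1.sub hB.1
  have heig (i : n) : hD.eigenvalues i ^ 2 ≤ ‖A * A - B * B‖ := by
    have hv : toEuclideanCLM (n := n) (𝕜 := 𝕜) (A - B) (hD.eigenvectorBasis i) =
        (hD.eigenvalues i : 𝕜) • hD.eigenvectorBasis i := by
      ext1
      rw [ofLp_toEuclideanCLM, hD.mulVec_eigenvectorBasis, RCLike.real_smul_eq_coe_smul (K := 𝕜)]
      rfl
    rw [map_sub] at hv
    simpa only [cstar_norm_def, map_sub, map_mul] using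
      ContinuousLinearMap.sq_le_norm_mul_self_sub_mul_self hA.isPositive_toEuclideanCLM
        hB.isPositive_toEuclideanCLM (hD.eigenvectorBasis.orthonormal.1 i) hv
  rw [← Real.le_sqrt (norm_nonneg _) (norm_nonneg _), hD.l2_opNorm_eq]
  refine (pi_norm_le_iff_of_nonneg (Real.sqrt_nonneg _)).mpr fun i ↦ ?_
  rw [Real.norm_eq_abs]
  exact Real.abs_le_sqrt (heig i)

end Matrix

open Matrix

/-- If `K`, `K̃` are PSD symmetric `m × m` matrices with entrywise difference at most `εK`,
then for any unit vector `w`, the vectors `K^{1/2} w` and `K̃^{1/2} w` differ by at most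
`√(m εK)` in every coordinate. -/
theorem sqrt_mulVec_entrywise_close {m : ℕ} (K K' : Matrix (Fin m) (Fin m) ℝ)
    (hK : K.PosSemidef) (hK' : K'.PosSemidef) (εK : ℝ)
    (hclose : ∀ i j, |K i j - K' i j| ≤ εK)
    (w : Fin m → ℝ) (hw : ∑ i, (w i) ^ 2 ≤ 1) :
    ∀ j, |(hK.sqrt.mulVec w) j - (hK'.sqrt.mulVec w) j| ≤ Real.sqrt (m * εK) := by
  intro j
  set D := hK.sqrt - hK'.sqrt
  have hD : ‖D‖ ^ 2 ≤ ‖K - K'‖ := by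
    simpa only [PosSemidef.sqrt_mul_self] using
      hK.posSemidef_sqrt.l2_opNorm_sub_sq_le hK'.posSemidef_sqrt
  have hKK' : ‖K - K'‖ ≤ m * εK := by
    simpa using l2_opNorm_le_card_mul (M := K - K') (by simpa [Matrix.sub_apply] using hclose)
  have hw_norm : ‖(WithLp.toLp 2 w : EuclideanSpace ℝ (Fin m))‖ ≤ 1 := by
    rw [EuclideanSpace.norm_eq, Real.sqrt_le_one]
    simpa using hw
  calc |(hK.sqrt *ᵥ w) j - (hK'.sqrt *ᵥ w) j|
      = |(toEuclideanCLM (n := Fin m) (𝕜 := ℝ) D (WithLp.toLp 2 w)).ofLp j| := by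
        rw [ofLp_toEuclideanCLM, sub_mulVec]; rfl
    _ ≤ ‖toEuclideanCLM (n := Fin m) (𝕜 := ℝ) D (WithLp.toLp 2 w)‖ :=
        Real.norm_eq_abs _ ▸ PiLp.norm_apply_le _ j
    _ ≤ ‖D‖ * ‖(WithLp.toLp 2 w : EuclideanSpace ℝ (Fin m))‖ := ContinuousLinearMap.le_opNorm _ _
    _ ≤ √(m * εK) * 1 := by gcongr; exact Real.le_sqrt_of_sq_le (hD.trans hKK')
    _ = _ := mul_one _
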